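/- Let p₀, p₃, p₄, ℓ₀, ℓ₁, ℓ₂, p∞ be nonnegative integers with p∞ ≤ 1, and let m ≥ 2 be an integer satisfying 3p₀ + p₃ + p₄ + 4ℓ₀ + 2ℓ₁ − 7 = m(p∞ + 2p₀ + 2p₃ + p₄ + 3ℓ₀ + 2ℓ₁ + ℓ₂ − 8) with the right-hand parenthesized expression positive. Then p₀ + 3p₃ + p₄ + 2ℓ₀ + 2ℓ₁ + 2ℓ₂ + 2p∞ ≤ 9. -/
import Mathlib


/-- If nonnegative integers `p₀, p₃, p₄, ℓ₀, ℓ₁, ℓ₂, p∞` (with `p∞ ≤ 1`)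
and an integer `m ≥ 2` satisfy the balancedness equation
`3p₀ + p₃ + p₄ + 4ℓ₀ + 2ℓ₁ − 7 = m(p∞ + 2p₀ + 2p₃ + p₄ + 3ℓ₀ + 2ℓ₁ + ℓ₂ − 8)`
with positive right-hand parenthesized expression, then
`p₀ + 3p₃ + p₄ + 2ℓ₀ + 2ℓ₁ + 2ℓ₂ + 2p∞ ≤ 9`. -/
theorem stmt14 (p₀ p₃ p₄ l₀ l₁ l₂ pinf m : ℤ)
    (hp₀ : 0 ≤ p₀) (hp₃ : 0 ≤ p₃) (hp₄ : 0 ≤ p₄)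
    (hl₀ : 0 ≤ l₀) (hl₁ : 0 ≤ l₁) (hl₂ : 0 ≤ l₂)
    (hpinf0 : 0 ≤ pinf) (hpinf1 : pinf ≤ 1) (hm : 2 ≤ m)
    (heq : 3 * p₀ + p₃ + p₄ + 4 * l₀ + 2 * l₁ - 7 =
      m * (pinf + 2 * p₀ + 2 * p₃ + p₄ + 3 * l₀ + 2 * l₁ + l₂ - 8))
    (hpos : 0 < pinf + 2 * p₀ + 2 * p₃ + p₄ + 3 * l₀ + 2 * l₁ + l₂ - 8) :
    p₀ + 3 * p₃ + p₄ + 2 * l₀ + 2 * l₁ + 2 * l₂ + 2 * pinf ≤ 9 := by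
  nlinarith [mul_nonneg (by linarith : (0:ℤ) ≤ m - 2)
    (by linarith : (0:ℤ) ≤ pinf + 2 * p₀ + 2 * p₃ + p₄ + 3 * l₀ + 2 * l₁ + l₂ - 8)]
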